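/- arXiv:2005.01881 — 2 statements merged into one kernel-verified Lean document; each statement's English description precedes it below -/
import Mathlib

section
/- If ρ is a separable state on ℂᵐ ⊗ ℂⁿ with ensemble decomposition ρ = Σ_μ q_μ |Φ_μ⟩⟨Φ_μ|, then for each μ the largest squared Schmidt coefficient λ^{(μ)}_1 of Φ_μ satisfies λ^{(μ)}_1 ≥ q_μ. -/
open Matrix

/-- Sort a finite tuple of reals in non-increasing order. -/
noncomputable def descSort {n : ℕ} (f : Fin n → ℝ) : Fin n → ℝ :=
  fun i => f (Tuple.sort f i.rev)

/-- Coefficient matrix of a vector in `ℂᵐ ⊗ ℂⁿ`. -/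
def coefMat {m n : ℕ} (ψ : Fin m × Fin n → ℂ) : Matrix (Fin m) (Fin n) ℂ :=
  Matrix.of fun i j => ψ (i, j)

/-- Squared Schmidt coefficients of `ψ`, in non-increasing order. -/
noncomputable def schmidtSq {m n : ℕ} (ψ : Fin m × Fin n → ℂ) : Fin n → ℝ :=
  descSort fun i =>
    (Matrix.isHermitian_conjTranspose_mul_self (coefMat ψ)).eigenvalues i

/-- The square of the largest Schmidt coefficient of `ψ`. -/
noncomputable def topSchmidtSq {m n : ℕ} (ψ : Fin m × Fin n → ℂ) : ℝ :=
  ⨆ i, schmidtSq ψ i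

/-- A state on `ℂᵐ ⊗ ℂⁿ` is separable if it is a convex combination of
pure product states. -/
def IsSeparableState {m n : ℕ} (ρ : Matrix (Fin m × Fin n) (Fin m × Fin n) ℂ) : Prop :=
  ∃ (N : ℕ) (p : Fin N → ℝ) (a : Fin N → Fin m → ℂ) (b : Fin N → Fin n → ℂ),
    (∀ k, 0 ≤ p k) ∧ (∑ k, p k = 1) ∧
    (∀ k, ∑ i, ‖a k i‖ ^ 2 = 1) ∧
    (∀ k, ∑ j, ‖b k j‖ ^ 2 = 1) ∧
    ρ = ∑ k, (p k : ℂ) •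
      Matrix.vecMulVec (fun x => a k x.1 * b k x.2) (star fun x => a k x.1 * b k x.2)

/-! ### Auxiliary lemmas -/

/-- Rayleigh quotient bound for a Hermitian matrix. -/
lemma rayleigh_le_iSup {n : ℕ} {A : Matrix (Fin n) (Fin n) ℂ} (hA : A.IsHermitian)
    (x : Fin n → ℂ) (hx : ∑ i, Complex.normSq (x i) = 1) :
    (star x ⬝ᵥ A *ᵥ x).re ≤ ⨆ i, hA.eigenvalues i := by
  have hn : Nonempty (Fin n) := by
    rcases isEmpty_or_nonempty (Fin n) with h | h
    · simp [Finset.univ_eq_empty] at hx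
    · exact h
  classical
  set U : Matrix (Fin n) (Fin n) ℂ := (hA.eigenvectorUnitary : Matrix (Fin n) (Fin n) ℂ) with hU
  set y : Fin n → ℂ := star U *ᵥ x with hy
  have hsy : star y = star x ᵥ* U := by
    rw [hy, star_mulVec]
    congr 1
    simp [Matrix.star_eq_conjTranspose]
  have key : star x ⬝ᵥ A *ᵥ x = ∑ i, (hA.eigenvalues i : ℂ) * Complex.normSq (y i) := by
    conv_lhs => rw [hA.spectral_theorem, Unitary.conjStarAlgAut_apply]
    rw [← mulVec_mulVec, ← mulVec_mulVec, dotProduct_mulVec, ← hsy, ← hU, ← hy]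
    simp only [dotProduct, mulVec_diagonal, Function.comp_apply, Pi.star_apply]
    refine Finset.sum_congr rfl fun i _ => ?_
    show star (y i) * ((hA.eigenvalues i : ℂ) * y i)
        = (hA.eigenvalues i : ℂ) * (Complex.normSq (y i) : ℂ)
    rw [Complex.star_def, Complex.normSq_eq_conj_mul_self]
    ring
  have hnorm : ∑ i, Complex.normSq (y i) = 1 := by
    have h1 : star y ⬝ᵥ y = star x ⬝ᵥ x := by
      rw [hsy, hy, ← dotProduct_mulVec, mulVec_mulVec]
      have : U * star U = 1 := by
        simpa [hU] using (Matrix.mem_unitaryGroup_iff.mp hA.eigenvectorUnitary.2)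
      rw [this, one_mulVec]
    have h1' : ∑ i, (starRingEnd ℂ) (y i) * y i = ∑ i, (starRingEnd ℂ) (x i) * x i := by
      simpa [dotProduct, Pi.star_apply, Complex.star_def] using h1
    have h2 : (↑(∑ i, Complex.normSq (y i)) : ℂ) = ↑(∑ i, Complex.normSq (x i)) := by
      push_cast [Complex.normSq_eq_conj_mul_self]
      exact h1'
    have h3 : ∑ i, Complex.normSq (y i) = ∑ i, Complex.normSq (x i) := by exact_mod_cast h2
    rw [h3, hx]
  rw [key]
  have hbdd : BddAbove (Set.range hA.eigenvalues) := Set.Finite.bddAbove (Set.finite_range _)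
  have : (∑ i, (hA.eigenvalues i : ℂ) * Complex.normSq (y i)).re
      = ∑ i, hA.eigenvalues i * Complex.normSq (y i) := by
    simp only [← Complex.ofReal_mul, ← Complex.ofReal_sum, Complex.ofReal_re]
  rw [this]
  calc ∑ i, hA.eigenvalues i * Complex.normSq (y i)
      ≤ ∑ i, (⨆ j, hA.eigenvalues j) * Complex.normSq (y i) := by
        refine Finset.sum_le_sum fun i _ => ?_
        exact mul_le_mul_of_nonneg_right (le_ciSup hbdd i) (Complex.normSq_nonneg _)
    _ = ⨆ j, hA.eigenvalues j := by rw [← Finset.mul_sum, hnorm, mul_one]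

/-- The overlap of `Φ` with a product unit vector is bounded by the top eigenvalue
of `Mᴴ M`, where `M` is the coefficient matrix of `Φ`. -/
lemma overlap_le {m n : ℕ} (Φ : Fin m × Fin n → ℂ) (a : Fin m → ℂ) (b : Fin n → ℂ)
    (ha : ∑ i, Complex.normSq (a i) = 1) (hb : ∑ j, Complex.normSq (b j) = 1) :
    Complex.normSq (∑ p, (starRingEnd ℂ) (Φ p) * (a p.1 * b p.2))
      ≤ ⨆ i, (Matrix.isHermitian_conjTranspose_mul_self (coefMat Φ)).eigenvalues i := by
  classical
  set M : Matrix (Fin m) (Fin n) ℂ := coefMat Φ with hM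
  set w : Fin m → ℂ := fun i => ∑ j, (starRingEnd ℂ) (M i j) * b j with hw
  set c : Fin n → ℂ := star b with hc
  -- rewrite the overlap
  have hS : (∑ p, (starRingEnd ℂ) (Φ p) * (a p.1 * b p.2)) = ∑ i, a i * w i := by
    rw [Fintype.sum_prod_type]
    refine Finset.sum_congr rfl fun i _ => ?_
    rw [hw, Finset.mul_sum]
    refine Finset.sum_congr rfl fun j _ => ?_
    simp only [hM, coefMat, Matrix.of_apply]
    ring
  -- Cauchy-Schwarz
  have hCS : Complex.normSq (∑ i, a i * w i) ≤ ∑ i, Complex.normSq (w i) := by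
    have h1 : ‖∑ i, a i * w i‖ ≤ ∑ i, ‖a i‖ * ‖w i‖ := by
      refine (norm_sum_le _ _).trans (le_of_eq ?_)
      exact Finset.sum_congr rfl fun i _ => norm_mul _ _
    have h2 : (∑ i, ‖a i‖ * ‖w i‖) ^ 2
        ≤ (∑ i, ‖a i‖ ^ 2) * ∑ i, ‖w i‖ ^ 2 :=
      Finset.sum_mul_sq_le_sq_mul_sq _ _ _
    have ha' : ∑ i, ‖a i‖ ^ 2 = 1 := by
      simpa [Complex.sq_norm] using ha
    have h3 : Complex.normSq (∑ i, a i * w i)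
        = ‖∑ i, a i * w i‖ ^ 2 := (Complex.sq_norm _).symm
    rw [h3]
    calc ‖∑ i, a i * w i‖ ^ 2
        ≤ (∑ i, ‖a i‖ * ‖w i‖) ^ 2 := by
          apply pow_le_pow_left₀ (norm_nonneg _) h1
      _ ≤ (∑ i, ‖a i‖ ^ 2) * ∑ i, ‖w i‖ ^ 2 := h2
      _ = ∑ i, Complex.normSq (w i) := by
          rw [ha', one_mul]
          exact Finset.sum_congr rfl fun i _ => Complex.sq_norm _
  -- relate ∑ normSq (w i) to the quadratic form
  have hMc : M *ᵥ c = fun i => (starRingEnd ℂ) (w i) := by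
    funext i
    simp [mulVec, dotProduct, hw, hc, map_sum, _root_.map_mul, Complex.star_def, mul_comm]
  have hquad : (star c ⬝ᵥ (Mᴴ * M) *ᵥ c) = ↑(∑ i, Complex.normSq (w i)) := by
    rw [← mulVec_mulVec, dotProduct_mulVec, ← star_mulVec, hMc]
    push_cast
    simp only [dotProduct, Pi.star_apply, RCLike.star_def, Complex.conj_conj]
    refine Finset.sum_congr rfl fun i _ => ?_
    rw [mul_comm]
    exact (Complex.normSq_eq_conj_mul_self).symm
  have hcnorm : ∑ j, Complex.normSq (c j) = 1 := by
    simpa [hc, Complex.normSq_conj] using hb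
  have := rayleigh_le_iSup (Matrix.isHermitian_conjTranspose_mul_self M) c hcnorm
  rw [hquad] at this
  simp only [Complex.ofReal_re] at this
  rw [hS]
  exact hCS.trans this

lemma iSup_descSort {n : ℕ} [Nonempty (Fin n)] (f : Fin n → ℝ) :
    (⨆ i, descSort f i) = ⨆ i, f i := by
  have hbdd : BddAbove (Set.range f) := Set.Finite.bddAbove (Set.finite_range _)
  have hbdd2 : BddAbove (Set.range (descSort f)) := Set.Finite.bddAbove (Set.finite_range _)
  apply le_antisymm
  · exact ciSup_le fun i => le_ciSup hbdd _
  · refine ciSup_le fun i => ?_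
    have : f i = descSort f ((Tuple.sort f).symm i).rev := by
      simp [descSort]
    rw [this]
    exact le_ciSup hbdd2 _

/-- quadratic form against a sum of rank-one projectors -/
lemma quad_sum {α : Type*} [Fintype α] {ι : Type*} [Fintype ι]
    (x : α → ℂ) (c : ι → ℝ) (u : ι → α → ℂ) :
    (∑ p, ∑ p', (starRingEnd ℂ) (x p) *
        ((∑ k, (c k : ℂ) • Matrix.vecMulVec (u k) (star (u k))) p p') * x p')
      = ∑ k, (c k : ℂ) * ↑(Complex.normSq (∑ p, (starRingEnd ℂ) (x p) * u k p)) := by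
  classical
  have : ∀ p p', (starRingEnd ℂ) (x p) *
        ((∑ k, (c k : ℂ) • Matrix.vecMulVec (u k) (star (u k))) p p') * x p'
      = ∑ k, (c k : ℂ) * ((starRingEnd ℂ) (x p) * u k p)
          * ((starRingEnd ℂ) (u k p') * x p') := by
    intro p p'
    simp only [Matrix.sum_apply, Matrix.smul_apply, Matrix.vecMulVec_apply, Pi.star_apply,
      smul_eq_mul, Finset.mul_sum, Finset.sum_mul, RCLike.star_def]
    refine Finset.sum_congr rfl fun k _ => ?_
    ring
  simp only [this]
  have swap : (∑ p, ∑ p', ∑ k, (c k : ℂ) * ((starRingEnd ℂ) (x p) * u k p)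
        * ((starRingEnd ℂ) (u k p') * x p'))
      = ∑ k, ∑ p, ∑ p', (c k : ℂ) * ((starRingEnd ℂ) (x p) * u k p)
        * ((starRingEnd ℂ) (u k p') * x p') :=
    (Finset.sum_congr rfl fun p _ => Finset.sum_comm).trans Finset.sum_comm
  rw [swap]
  refine Finset.sum_congr rfl fun k _ => ?_
  have expand : (∑ p, ∑ p', (c k : ℂ) * ((starRingEnd ℂ) (x p) * u k p)
      * ((starRingEnd ℂ) (u k p') * x p'))
      = (c k : ℂ) * ((∑ p, (starRingEnd ℂ) (x p) * u k p)
        * (∑ p', (starRingEnd ℂ) (u k p') * x p')) := by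
    rw [Finset.sum_mul_sum, Finset.mul_sum]
    refine Finset.sum_congr rfl fun p _ => ?_
    rw [Finset.mul_sum]
    refine Finset.sum_congr rfl fun p' _ => ?_
    ring
  rw [expand]
  congr 1
  have hc : (∑ p', (starRingEnd ℂ) (u k p') * x p')
      = (starRingEnd ℂ) (∑ p, (starRingEnd ℂ) (x p) * u k p) := by
    rw [map_sum]
    refine Finset.sum_congr rfl fun p _ => ?_
    rw [map_mul (starRingEnd ℂ), Complex.conj_conj, mul_comm]
  rw [hc, Complex.mul_conj]

/-- If `ρ` is separable, then in any ensemble decomposition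
`ρ = ∑ q_μ |Φ_μ⟩⟨Φ_μ|` each `Φ_μ` has largest squared Schmidt coefficient
at least `q_μ`. -/
theorem stmt12 {m n N : ℕ} (hmn : m ≤ n)
    (ρ : Matrix (Fin m × Fin n) (Fin m × Fin n) ℂ)
    (hsep : IsSeparableState ρ)
    (q : Fin N → ℝ) (hq : ∀ μ, 0 < q μ) (hq1 : ∑ μ, q μ = 1)
    (Φ : Fin N → (Fin m × Fin n → ℂ))
    (hΦ : ∀ μ, ∑ p, ‖Φ μ p‖ ^ 2 = 1)
    (hρ : ρ = ∑ μ, (q μ : ℂ) • Matrix.vecMulVec (Φ μ) (star (Φ μ))) :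
    ∀ μ, q μ ≤ topSchmidtSq (Φ μ) := by
  intro μ
  classical
  obtain ⟨K, p, a, b, hp0, hp1, ha, hb, hρ'⟩ := hsep
  have hΦ' : ∀ ν, ∑ pp, Complex.normSq (Φ ν pp) = 1 := fun ν => by
    simpa [Complex.sq_norm] using hΦ ν
  have hne : Nonempty (Fin m × Fin n) := by
    rcases isEmpty_or_nonempty (Fin m × Fin n) with h | h
    · exfalso; have := hΦ' μ; simp [Finset.univ_eq_empty] at this
    · exact h
  have hnen : Nonempty (Fin n) := ⟨hne.some.2⟩
  set Λ : ℝ := ⨆ i, (Matrix.isHermitian_conjTranspose_mul_self (coefMat (Φ μ))).eigenvalues i with hΛ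
  -- the two expressions for the quadratic form
  have h1 : (∑ pp, ∑ pp', (starRingEnd ℂ) (Φ μ pp) * ρ pp pp' * Φ μ pp')
      = ∑ ν, (q ν : ℂ) * ↑(Complex.normSq (∑ pp, (starRingEnd ℂ) (Φ μ pp) * Φ ν pp)) := by
    rw [hρ]; exact quad_sum (Φ μ) q Φ
  have h2 : (∑ pp, ∑ pp', (starRingEnd ℂ) (Φ μ pp) * ρ pp pp' * Φ μ pp')
      = ∑ k, (p k : ℂ) * ↑(Complex.normSq (∑ pp, (starRingEnd ℂ) (Φ μ pp)
          * (a k pp.1 * b k pp.2))) := by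
    rw [hρ']; exact quad_sum (Φ μ) p (fun k pp => a k pp.1 * b k pp.2)
  have hreal : (∑ ν, q ν * Complex.normSq (∑ pp, (starRingEnd ℂ) (Φ μ pp) * Φ ν pp))
      = ∑ k, p k * Complex.normSq (∑ pp, (starRingEnd ℂ) (Φ μ pp) * (a k pp.1 * b k pp.2)) := by
    exact_mod_cast h1.symm.trans h2
  -- lower bound
  have hself : (∑ pp, (starRingEnd ℂ) (Φ μ pp) * Φ μ pp) = 1 := by
    have : (∑ pp, (starRingEnd ℂ) (Φ μ pp) * Φ μ pp)
        = ↑(∑ pp, Complex.normSq (Φ μ pp)) := by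
      push_cast
      exact Finset.sum_congr rfl fun pp _ => (Complex.normSq_eq_conj_mul_self).symm
    rw [this, hΦ' μ, Complex.ofReal_one]
  have hlow : q μ ≤ ∑ ν, q ν * Complex.normSq (∑ pp, (starRingEnd ℂ) (Φ μ pp) * Φ ν pp) := by
    have := Finset.single_le_sum
      (f := fun ν => q ν * Complex.normSq (∑ pp, (starRingEnd ℂ) (Φ μ pp) * Φ ν pp))
      (fun ν _ => mul_nonneg (hq ν).le (Complex.normSq_nonneg _)) (Finset.mem_univ μ)
    simp only [hself, Complex.normSq_one, mul_one] at this
    exact this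
  -- upper bound
  have ha' : ∀ k, ∑ i, Complex.normSq (a k i) = 1 := fun k => by
    simpa [Complex.sq_norm] using ha k
  have hb' : ∀ k, ∑ j, Complex.normSq (b k j) = 1 := fun k => by
    simpa [Complex.sq_norm] using hb k
  have hup : (∑ k, p k * Complex.normSq (∑ pp, (starRingEnd ℂ) (Φ μ pp)
      * (a k pp.1 * b k pp.2))) ≤ Λ := by
    calc (∑ k, p k * Complex.normSq (∑ pp, (starRingEnd ℂ) (Φ μ pp) * (a k pp.1 * b k pp.2)))
        ≤ ∑ k, p k * Λ := by
          refine Finset.sum_le_sum fun k _ => ?_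
          exact mul_le_mul_of_nonneg_left (overlap_le (Φ μ) (a k) (b k) (ha' k) (hb' k)) (hp0 k)
      _ = Λ := by rw [← Finset.sum_mul, hp1, one_mul]
  have hfinal : q μ ≤ Λ := hlow.trans (hreal ▸ hup)
  -- identify Λ with topSchmidtSq
  have : topSchmidtSq (Φ μ) = Λ := by
    rw [topSchmidtSq, schmidtSq, iSup_descSort]
  rw [this]
  exact hfinal
end

section
/- Let ρ and ρ_M be density operators on an mn-dimensional Hilbert space, Π_V a rank-k orthogonal projection, Λ ∈ (0,1), and δ > 0 with Tr(ρ Π_V) = Λ + δ. Then for any p ∈ [0,1] satisfying p < δ / (Λ + δ + ‖ρ_M‖_(mn−k) − 1) (assuming the denominator is positive), the mixture (1−p)ρ + p·ρ_M satisfies Tr(((1−p)ρ + p ρ_M) Π_V) > Λ. -/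
/-!
Ky Fan's maximum principle: for Hermitian `A` and an orthogonal projection `Q` of rank `r`,
`Re Tr(A Q)` is at most the sum of the `r` largest eigenvalues of `A`. In an eigenbasis of `A`,
`Tr(A Q) = ∑ λᵢ qᵢ` where the diagonal entries `qᵢ` of the conjugated projection lie in `[0, 1]` and
sum to `r`, and such a weighted sum is largest when the weight sits on the `r` largest `λᵢ`.
Applied to `1 - Π_V` this gives `Tr(ρ_M Π_V) ≥ 1 - ‖ρ_M‖_(mn-k)`, so the overlap of the mixture
with `Π_V` is at least `Λ + δ - p (Λ + δ + ‖ρ_M‖_(mn-k) - 1) > Λ`.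
-/

open Matrix
open scoped ComplexOrder

/-- The sum of the `j` largest entries of a tuple of reals (the Ky Fan `j`-norm
when applied to the eigenvalues of a density operator). -/
noncomputable def kyFan {d : ℕ} (f : Fin d → ℝ) (j : ℕ) : ℝ :=
  ∑ i ∈ Finset.univ.filter (fun i : Fin d => (i : ℕ) < j), descSort f i

open Finset

lemma descSort_antitone {d : ℕ} (f : Fin d → ℝ) : Antitone (descSort f) :=
  fun _ _ hij => Tuple.monotone_sort f (Fin.rev_le_rev.mpr hij)

lemma sum_mul_le_sum_of_threshold {ι : Type*} [Fintype ι] [DecidableEq ι] (S : Finset ι)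
    {g q : ι → ℝ} (c : ℝ) (hgS : ∀ i ∈ S, c ≤ g i) (hgSc : ∀ i ∉ S, g i ≤ c)
    (hq0 : ∀ i, 0 ≤ q i) (hq1 : ∀ i, q i ≤ 1) (hq : ∑ i, q i = #S) :
    ∑ i, g i * q i ≤ ∑ i ∈ S, g i := by
  -- each term `(g i - c) * (q i - [i ∈ S])` is nonpositive
  have hpoint (i : ι) :
      g i * q i ≤ c * (q i - if i ∈ S then 1 else 0) + if i ∈ S then g i else 0 := by
    by_cases hi : i ∈ S
    · simp only [hi, if_true]; nlinarith [hgS i hi, hq1 i]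
    · simp only [hi, if_false]; nlinarith [hgSc i hi, hq0 i]
  calc ∑ i, g i * q i
      ≤ ∑ i, (c * (q i - if i ∈ S then 1 else 0) + if i ∈ S then g i else 0) :=
        sum_le_sum fun i _ => hpoint i
    _ = ∑ i ∈ S, g i := by
        rw [sum_add_distrib, ← mul_sum, sum_sub_distrib, hq, sum_ite_mem, sum_ite_mem,
          univ_inter, sum_const, nsmul_one, sub_self, mul_zero, zero_add]

lemma sum_mul_le_kyFan {d r : ℕ} (f q : Fin d → ℝ) (hq0 : ∀ i, 0 ≤ q i) (hq1 : ∀ i, q i ≤ 1)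
    (hq : ∑ i, q i = r) : ∑ i, f i * q i ≤ kyFan f r := by
  have hrd : r ≤ d := by
    have : (r : ℝ) ≤ d := by simpa [← hq] using sum_le_sum fun i (_ : i ∈ univ) => hq1 i
    exact_mod_cast this
  set σ : Equiv.Perm (Fin d) := Fin.revPerm.trans (Tuple.sort f)
  have hσ : ∑ i, f i * q i = ∑ i, descSort f i * q (σ i) :=
    (Equiv.sum_comp σ fun i => f i * q i).symm
  have hcard : #{i : Fin d | (i : ℕ) < r} = r := by
    rw [Fin.card_filter_val_lt, min_eq_right hrd]
  obtain ⟨c, hcS, hcSc⟩ : ∃ c, (∀ i : Fin d, (i : ℕ) < r → c ≤ descSort f i) ∧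
      (∀ i : Fin d, r ≤ i → descSort f i ≤ c) := by
    by_cases hr : r < d
    · exact ⟨descSort f ⟨r, hr⟩, fun i hi => descSort_antitone f (Fin.mk_le_of_le_val hi.le),
        fun i hi => descSort_antitone f (Fin.le_def.mpr hi)⟩
    · exact ⟨⨅ i, descSort f i, fun i _ => ciInf_le (Finite.bddBelow_range _) i,
        fun i hi => absurd i.isLt (by omega)⟩
  rw [hσ, kyFan]
  refine sum_mul_le_sum_of_threshold _ c (fun i hi => hcS i (by simpa using hi))
    (fun i hi => hcSc i (by simpa using hi)) (fun i => hq0 _) (fun i => hq1 _) ?_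
  rw [hcard, Equiv.sum_comp σ q, hq]

open scoped MatrixOrder in
lemma IsStarProjection.re_diag_mem_Icc {n : Type*} [Fintype n] [DecidableEq n]
    {Q : Matrix n n ℂ} (hQ : IsStarProjection Q) (i : n) : (Q i i).re ∈ Set.Icc 0 1 := by
  have h0 : 0 ≤ Q i i := (nonneg_iff_posSemidef.mp hQ.nonneg).diag_nonneg
  have h1 : 0 ≤ (1 - Q) i i := (nonneg_iff_posSemidef.mp hQ.one_sub_nonneg).diag_nonneg
  constructor
  · exact (Complex.nonneg_iff.mp h0).1
  · simpa using (Complex.nonneg_iff.mp h1).1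

lemma Matrix.IsHermitian.re_trace_mul_eq_sum_eigenvalues_mul {n : Type*} [Fintype n] [DecidableEq n]
    {A : Matrix n n ℂ} (hA : A.IsHermitian) (Q : Matrix n n ℂ) :
    ((A * Q).trace).re = ∑ i, hA.eigenvalues i *
      (Unitary.conjStarAlgAut ℂ _ (star hA.eigenvectorUnitary) Q i i).re := by
  conv_lhs => rw [hA.spectral_theorem]
  rw [Unitary.conjStarAlgAut_apply, Unitary.conjStarAlgAut_star_apply, Matrix.mul_assoc,
    Matrix.mul_assoc, trace_mul_comm, Matrix.mul_assoc, trace, Complex.re_sum]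
  simp [diagonal_mul]

theorem Matrix.IsHermitian.re_trace_mul_le_kyFan {d r : ℕ} {A Q : Matrix (Fin d) (Fin d) ℂ}
    (hA : A.IsHermitian) (hQ : IsStarProjection Q) (hQtr : Q.trace = r) :
    ((A * Q).trace).re ≤ kyFan hA.eigenvalues r := by
  set Q' := Unitary.conjStarAlgAut ℂ _ (star hA.eigenvectorUnitary) Q with hQ'_def
  have hQ' : IsStarProjection Q' := hQ.map _
  have hQ'tr : ∑ i, (Q' i i).re = r := by
    rw [← Complex.re_sum]
    change Q'.trace.re = r
    rw [hQ'_def, Unitary.conjStarAlgAut_star_apply, trace_mul_cycle,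
      Unitary.mul_star_self_of_mem hA.eigenvectorUnitary.2, Matrix.one_mul, hQtr,
      Complex.natCast_re]
  rw [hA.re_trace_mul_eq_sum_eigenvalues_mul]
  exact sum_mul_le_kyFan _ _ (fun i => (hQ'.re_diag_mem_Icc i).1)
    (fun i => (hQ'.re_diag_mem_Icc i).2) hQ'tr

lemma Matrix.IsHermitian.one_sub_kyFan_le_re_trace_mul {d k : ℕ} (hk : k ≤ d)
    {A P : Matrix (Fin d) (Fin d) ℂ} (hA : A.IsHermitian) (hAtr : A.trace = 1)
    (hP : IsStarProjection P) (hPtr : P.trace = k) :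
    1 - kyFan hA.eigenvalues (d - k) ≤ ((A * P).trace).re := by
  have hcompl : (1 - P).trace = ((d - k : ℕ) : ℂ) := by
    rw [trace_sub, trace_one, hPtr, Fintype.card_fin, Nat.cast_sub hk]
  have h := hA.re_trace_mul_le_kyFan hP.one_sub hcompl
  rw [Matrix.mul_sub, Matrix.mul_one, trace_sub, hAtr, Complex.sub_re, Complex.one_re] at h
  linarith

theorem stmt16_general {m n k : ℕ} (hk : k ≤ m * n)
    (ρ ρM P : Matrix (Fin (m * n)) (Fin (m * n)) ℂ)
    (hρM : ρM.PosSemidef) (hρMtr : ρM.trace = 1)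
    (hP : P.IsHermitian) (hP2 : P * P = P) (hPtr : P.trace = (k : ℂ))
    (Λ δ : ℝ)
    (htr : ((ρ * P).trace).re = Λ + δ)
    (p : ℝ) (hp0 : 0 ≤ p)
    (hden : 0 < Λ + δ + kyFan hρM.1.eigenvalues (m * n - k) - 1)
    (hpb : p < δ / (Λ + δ + kyFan hρM.1.eigenvalues (m * n - k) - 1)) :
    Λ < ((((1 - p : ℝ) • ρ + (p : ℝ) • ρM) * P).trace).re := by
  have hM := hρM.1.one_sub_kyFan_le_re_trace_mul hk hρMtr ⟨hP2, hP⟩ hPtr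
  have hp := (lt_div_iff₀ hden).mp hpb
  have hmix : ((((1 - p : ℝ) • ρ + p • ρM) * P).trace).re
      = (1 - p) * ((ρ * P).trace).re + p * ((ρM * P).trace).re := by
    simp only [Matrix.add_mul, Matrix.smul_mul, trace_add, trace_smul, Complex.add_re,
      Complex.real_smul, Complex.re_ofReal_mul]
  rw [hmix, htr]
  linarith [mul_le_mul_of_nonneg_left hM hp0]

/-- Robustness of entanglement: if `Tr(ρ Π_V) = Λ + δ` and
`p < δ / (Λ + δ + ‖ρ_M‖_(mn-k) - 1)`, then the mixture `(1-p)ρ + p ρ_M`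
still violates the separability bound `Tr(σ Π_V) ≤ Λ`. -/
theorem stmt16 {m n k : ℕ} (hk : k ≤ m * n)
    (ρ ρM P : Matrix (Fin (m * n)) (Fin (m * n)) ℂ)
    (hρ : ρ.PosSemidef) (hρtr : ρ.trace = 1)
    (hρM : ρM.PosSemidef) (hρMtr : ρM.trace = 1)
    (hP : P.IsHermitian) (hP2 : P * P = P) (hPtr : P.trace = (k : ℂ))
    (Λ δ : ℝ) (hΛ0 : 0 < Λ) (hΛ1 : Λ < 1) (hδ : 0 < δ)
    (htr : ((ρ * P).trace).re = Λ + δ)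
    (p : ℝ) (hp0 : 0 ≤ p) (hp1 : p ≤ 1)
    (hden : 0 < Λ + δ + kyFan hρM.1.eigenvalues (m * n - k) - 1)
    (hpb : p < δ / (Λ + δ + kyFan hρM.1.eigenvalues (m * n - k) - 1)) :
    Λ < ((((1 - p : ℝ) • ρ + (p : ℝ) • ρM) * P).trace).re :=
  stmt16_general hk ρ ρM P hρM hρMtr hP hP2 hPtr Λ δ htr p hp0 hden hpb
end
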